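/- Let r ∈ (2,∞). There exists a constant C = C(r) such that for all measurable functions f, u : ℝ² → ℂ, ‖ f(x) · ∫_{ℝ²} |log(|x−y|/⟨x⟩)| |u(y)|² dy ‖_{L²_x(ℝ²)} ≤ C (‖f‖_{L²} + ‖f‖_{L^r}) · ‖ (1 + log⟨·⟩)^{1/2} u ‖_{L²}², where both sides may be +∞. -/

import Mathlib

open MeasureTheory ENNReal NNReal Set Metric

noncomputable section

abbrev E2 := EuclideanSpace ℝ (Fin 2)

/-- The Japanese bracket `⟨x⟩ = (1+|x|²)^{1/2}`. -/
noncomputable def jbr (x : E2) : ℝ := Real.sqrt (1 + ‖x‖ ^ 2)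

lemma one_le_jbr (x : E2) : 1 ≤ jbr x := by
  rw [jbr]
  nlinarith [Real.sq_sqrt (show (0:ℝ) ≤ 1 + ‖x‖^2 by positivity),
    Real.sqrt_nonneg (1 + ‖x‖^2), sq_nonneg ‖x‖, sq_nonneg (Real.sqrt (1 + ‖x‖^2) - 1)]

lemma jbr_pos (x : E2) : 0 < jbr x := lt_of_lt_of_le one_pos (one_le_jbr x)

lemma log_jbr_nonneg (x : E2) : 0 ≤ Real.log (jbr x) := Real.log_nonneg (one_le_jbr x)

lemma norm_le_jbr (x : E2) : ‖x‖ ≤ jbr x := by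
  have h := Real.sqrt_le_sqrt (show ‖x‖^2 ≤ 1 + ‖x‖^2 by linarith)
  rwa [Real.sqrt_sq (norm_nonneg x)] at h

lemma jbr_le (x : E2) : jbr x ≤ 1 + ‖x‖ := sqrt_one_add_norm_sq_le x

lemma measurable_jbr : Measurable jbr :=
  (Real.continuous_sqrt.comp (by continuity)).measurable

/-- The local log kernel. -/
def Gk (z : E2) : ℝ≥0∞ := ENNReal.ofReal (if ‖z‖ ≤ 1 then -Real.log ‖z‖ else 0)

lemma measurable_Gk : Measurable Gk := by
  apply ENNReal.measurable_ofReal.comp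
  exact Measurable.ite (measurableSet_le measurable_norm measurable_const)
    (Real.measurable_log.comp measurable_norm).neg measurable_const

lemma kernel_bound_real (x y : E2) :
    |Real.log (‖x - y‖ / jbr x)| ≤
      2 * (1 + Real.log (jbr y)) + (if ‖x - y‖ ≤ 1 then -Real.log ‖x - y‖ else 0) := by
  have hjx := one_le_jbr x; have hjy := one_le_jbr y
  have hlx := log_jbr_nonneg x; have hly := log_jbr_nonneg y
  have hd0 : (0:ℝ) ≤ ‖x - y‖ := norm_nonneg _
  rcases eq_or_lt_of_le hd0 with h0 | hdpos
  · rw [← h0]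
    simp only [zero_div, Real.log_zero, abs_zero]
    have : (if (0:ℝ) ≤ 1 then -Real.log 0 else 0) = 0 := by simp
    rw [if_pos (by norm_num : (0:ℝ) ≤ 1)]
    simp only [Real.log_zero, neg_zero]
    linarith
  · set d := ‖x - y‖ with hdd
    have hub : d ≤ 2 * (jbr x * jbr y) := by
      have h1 : d ≤ ‖x‖ + ‖y‖ := norm_sub_le x y
      have h2 := norm_le_jbr x; have h3 := norm_le_jbr y
      nlinarith
    have hlog2 : Real.log 2 ≤ 1 := by
      have := Real.log_le_sub_one_of_pos (by norm_num : (0:ℝ) < 2); linarith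
    have hlog3 : Real.log 3 ≤ 2 := by
      have := Real.log_le_sub_one_of_pos (by norm_num : (0:ℝ) < 3); linarith
    have hlogd_ub : Real.log d ≤ Real.log 2 + (Real.log (jbr x) + Real.log (jbr y)) := by
      calc Real.log d ≤ Real.log (2 * (jbr x * jbr y)) := Real.log_le_log hdpos hub
        _ = _ := by
          rw [Real.log_mul (by norm_num) (by positivity), Real.log_mul (by positivity) (by positivity)]
    rw [Real.log_div hdpos.ne' (jbr_pos x).ne', abs_le]
    constructor
    · -- lower bound : -(RHS) ≤ log d - log jbr x
      have hlb : jbr x ≤ 3 * (jbr y * max d 1) := by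
        have h1 : jbr x ≤ 1 + ‖x‖ := jbr_le x
        have h2 : ‖x‖ ≤ ‖y‖ + d := by
          rw [hdd]; have := norm_sub_norm_le x y; have := norm_le_insert' x y
          calc ‖x‖ = ‖y + (x - y)‖ := by rw [show y + (x - y) = x by abel]
            _ ≤ ‖y‖ + ‖x - y‖ := norm_add_le _ _
        have h3 := norm_le_jbr y
        have h4 : d ≤ max d 1 := le_max_left _ _
        have h5 : (1:ℝ) ≤ max d 1 := le_max_right _ _
        nlinarith
      have hlogx_ub : Real.log (jbr x) ≤ Real.log 3 + (Real.log (jbr y) + Real.log (max d 1)) := by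
        calc Real.log (jbr x) ≤ Real.log (3 * (jbr y * max d 1)) :=
              Real.log_le_log (jbr_pos x) hlb
          _ = _ := by
            rw [Real.log_mul (by norm_num) (by positivity), Real.log_mul (by positivity) (by positivity)]
      by_cases hd1 : d ≤ 1
      · rw [if_pos hd1]
        have : max d 1 = 1 := max_eq_right hd1
        rw [this, Real.log_one] at hlogx_ub
        linarith
      · rw [if_neg hd1]
        have : max d 1 = d := max_eq_left (le_of_not_ge hd1)
        rw [this] at hlogx_ub
        linarith
    · -- upper bound
      have hsec : 0 ≤ (if d ≤ 1 then -Real.log d else 0) := by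
        split_ifs with h
        · simp only [neg_nonneg]; exact Real.log_nonpos hd0 h
        · exact le_refl 0
      linarith

lemma kernel_bound (x y : E2) :
    ENNReal.ofReal |Real.log (‖x - y‖ / jbr x)| ≤
      2 * ENNReal.ofReal (1 + Real.log (jbr y)) + Gk (x - y) := by
  have h := kernel_bound_real x y
  have h1 : (0:ℝ) ≤ 2 * (1 + Real.log (jbr y)) := by
    have := log_jbr_nonneg y; linarith
  have h2 : (0:ℝ) ≤ (if ‖x - y‖ ≤ 1 then -Real.log ‖x - y‖ else 0) := by
    split_ifs with hc
    · simp only [neg_nonneg]; exact Real.log_nonpos (norm_nonneg _) hc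
    · exact le_refl 0
  calc ENNReal.ofReal |Real.log (‖x - y‖ / jbr x)|
      ≤ ENNReal.ofReal (2 * (1 + Real.log (jbr y)) +
          (if ‖x - y‖ ≤ 1 then -Real.log ‖x - y‖ else 0)) := ENNReal.ofReal_le_ofReal h
    _ = ENNReal.ofReal (2 * (1 + Real.log (jbr y))) + Gk (x - y) := by
        rw [ENNReal.ofReal_add h1 h2]; rfl
    _ = 2 * ENNReal.ofReal (1 + Real.log (jbr y)) + Gk (x - y) := by
        rw [ENNReal.ofReal_mul (by norm_num : (0:ℝ) ≤ 2)]
        norm_num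

lemma finite_sing :
    ∫⁻ z : E2 in closedBall 0 1, ENNReal.ofReal (‖z‖ ^ (-2⁻¹ : ℝ)) < ∞ := by
  set μ := volume.restrict (closedBall (0:E2) 1) with hμ
  have hnn : 0 ≤ᵐ[μ] fun z : E2 => ‖z‖ ^ (-2⁻¹ : ℝ) :=
    Filter.Eventually.of_forall fun z => Real.rpow_nonneg (norm_nonneg z) _
  have hm : AEMeasurable (fun z : E2 => ‖z‖ ^ (-2⁻¹ : ℝ)) μ :=
    (measurable_norm.pow_const _).aemeasurable
  rw [lintegral_eq_lintegral_meas_le μ hnn hm]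
  have hcb : volume (closedBall (0:E2) 1) < ∞ := measure_closedBall_lt_top
  calc ∫⁻ t in Ioi (0:ℝ), μ {a : E2 | t ≤ ‖a‖ ^ (-2⁻¹ : ℝ)}
      ≤ ∫⁻ t in Ioc (0:ℝ) 1 ∪ Ioi 1, μ {a : E2 | t ≤ ‖a‖ ^ (-2⁻¹ : ℝ)} :=
        lintegral_mono_set Ioi_subset_Ioc_union_Ioi
    _ ≤ (∫⁻ t in Ioc (0:ℝ) 1, μ {a : E2 | t ≤ ‖a‖ ^ (-2⁻¹ : ℝ)}) +
        ∫⁻ t in Ioi (1:ℝ), μ {a : E2 | t ≤ ‖a‖ ^ (-2⁻¹ : ℝ)} := lintegral_union_le _ _ _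
    _ < ∞ := by
        apply ENNReal.add_lt_top.2
        constructor
        · calc ∫⁻ t in Ioc (0:ℝ) 1, μ {a : E2 | t ≤ ‖a‖ ^ (-2⁻¹ : ℝ)}
              ≤ ∫⁻ _ in Ioc (0:ℝ) 1, volume (closedBall (0:E2) 1) := by
                apply lintegral_mono; intro t
                exact le_trans (measure_mono (subset_univ _))
                  (by rw [hμ, Measure.restrict_apply_univ])
            _ = volume (closedBall (0:E2) 1) * volume (Ioc (0:ℝ) 1) := by
                rw [setLIntegral_const]
            _ < ∞ := ENNReal.mul_lt_top hcb (by simp)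
        · have hsub : ∀ t : ℝ, 1 < t → {a : E2 | t ≤ ‖a‖ ^ (-2⁻¹ : ℝ)} ⊆
              closedBall (0:E2) (t ^ (-2 : ℝ)) := by
            intro t ht a ha
            simp only [mem_setOf_eq] at ha
            have hna : (0:ℝ) < ‖a‖ := by
              by_contra hcon
              push_neg at hcon
              have : ‖a‖ = 0 := le_antisymm hcon (norm_nonneg a)
              rw [this, Real.zero_rpow (by norm_num)] at ha
              linarith
            simp only [mem_closedBall, dist_zero_right]
            have h2 : (‖a‖ ^ (-2⁻¹ : ℝ)) ^ (-2 : ℝ) ≤ t ^ (-2 : ℝ) :=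
              Real.rpow_le_rpow_of_nonpos (by linarith) ha (by norm_num)
            rwa [← Real.rpow_mul hna.le, show ((-2⁻¹) * (-2) : ℝ) = 1 by norm_num,
              Real.rpow_one] at h2
          calc ∫⁻ t in Ioi (1:ℝ), μ {a : E2 | t ≤ ‖a‖ ^ (-2⁻¹ : ℝ)}
              ≤ ∫⁻ t in Ioi (1:ℝ), ENNReal.ofReal (t ^ (-4 : ℝ)) * volume (ball (0:E2) 1) := by
                apply setLIntegral_mono' measurableSet_Ioi
                intro t ht
                replace ht : 1 < t := mem_Ioi.mp ht
                calc μ {a : E2 | t ≤ ‖a‖ ^ (-2⁻¹ : ℝ)}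
                    ≤ volume (closedBall (0:E2) (t ^ (-2 : ℝ))) := by
                      rw [hμ]
                      exact le_trans (Measure.restrict_apply_le _ _)
                        (measure_mono (hsub t ht))
                  _ = ENNReal.ofReal ((t ^ (-2:ℝ)) ^ Module.finrank ℝ E2) * volume (ball (0:E2) 1) :=
                      Measure.addHaar_closedBall _ _ (Real.rpow_nonneg (by linarith) _)
                  _ = ENNReal.ofReal (t ^ (-4 : ℝ)) * volume (ball (0:E2) 1) := by
                      congr 2
                      have : Module.finrank ℝ E2 = 2 := by
                        simp [finrank_euclideanSpace]
                      rw [this, ← Real.rpow_natCast (t ^ (-2:ℝ)) 2,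
                        ← Real.rpow_mul (by linarith : (0:ℝ) ≤ t)]
                      norm_num
            _ = (∫⁻ t in Ioi (1:ℝ), ENNReal.ofReal (t ^ (-4 : ℝ))) * volume (ball (0:E2) 1) := by
                rw [lintegral_mul_const' _ _ measure_ball_lt_top.ne]
            _ < ∞ := by
                apply ENNReal.mul_lt_top _ measure_ball_lt_top
                exact (integrableOn_Ioi_rpow_of_lt (by norm_num) one_pos).setLIntegral_lt_top

lemma Gk_pow_le (s : ℝ) (hs : 1 ≤ s) (z : E2) :
    Gk z ^ s ≤ (closedBall (0:E2) 1).indicator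
      (fun z => ENNReal.ofReal ((2*s)^s) * ENNReal.ofReal (‖z‖ ^ (-2⁻¹ : ℝ))) z := by
  have hs0 : 0 < s := lt_of_lt_of_le one_pos hs
  by_cases h1 : ‖z‖ ≤ 1
  · rw [indicator_of_mem (by simpa [mem_closedBall, dist_zero_right] using h1)]
    rcases eq_or_lt_of_le (norm_nonneg z) with h0 | h0
    · rw [Gk, if_pos h1, ← h0]
      simp only [Real.log_zero, neg_zero, ENNReal.ofReal_zero,
        ENNReal.zero_rpow_of_pos hs0]
      exact zero_le
    · -- 0 < ‖z‖ ≤ 1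
      have hlog : -Real.log ‖z‖ ≤ 2*s * ‖z‖ ^ (-(2*s)⁻¹ : ℝ) := by
        have key : Real.log (‖z‖ ^ (-(2*s)⁻¹ : ℝ)) ≤ ‖z‖ ^ (-(2*s)⁻¹ : ℝ) := by
          have hp : (0:ℝ) < ‖z‖ ^ (-(2*s)⁻¹ : ℝ) := Real.rpow_pos_of_pos h0 _
          have := Real.log_le_sub_one_of_pos hp
          linarith
        rw [Real.log_rpow h0] at key
        have h2s : (0:ℝ) < 2*s := by linarith
        calc -Real.log ‖z‖ = (2*s) * (-(2*s)⁻¹ * Real.log ‖z‖) := by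
              field_simp
          _ ≤ (2*s) * (‖z‖ ^ (-(2*s)⁻¹ : ℝ)) := by
              apply mul_le_mul_of_nonneg_left key h2s.le
      have hlognn : 0 ≤ -Real.log ‖z‖ := by
        simp only [neg_nonneg]; exact Real.log_nonpos (norm_nonneg z) h1
      rw [Gk, if_pos h1, ENNReal.ofReal_rpow_of_nonneg hlognn hs0.le]
      rw [← ENNReal.ofReal_mul (by positivity)]
      apply ENNReal.ofReal_le_ofReal
      calc (-Real.log ‖z‖) ^ s ≤ (2*s * ‖z‖ ^ (-(2*s)⁻¹ : ℝ)) ^ s := by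
            apply Real.rpow_le_rpow hlognn hlog hs0.le
        _ = (2*s)^s * (‖z‖ ^ (-(2*s)⁻¹ : ℝ)) ^ s := by
            rw [Real.mul_rpow (by linarith) (Real.rpow_nonneg (norm_nonneg z) _)]
        _ = (2*s)^s * ‖z‖ ^ (-2⁻¹ : ℝ) := by
            rw [← Real.rpow_mul (norm_nonneg z)]
            congr 2
            field_simp
  · rw [Gk, if_neg h1]
    simp only [ENNReal.ofReal_zero, ENNReal.zero_rpow_of_pos hs0]
    exact zero_le

lemma finite_Gk_rpow (s : ℝ) (hs : 1 ≤ s) : ∫⁻ z : E2, Gk z ^ s < ∞ := by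
  calc ∫⁻ z : E2, Gk z ^ s
      ≤ ∫⁻ z : E2, (closedBall (0:E2) 1).indicator
          (fun z => ENNReal.ofReal ((2*s)^s) * ENNReal.ofReal (‖z‖ ^ (-2⁻¹ : ℝ))) z :=
        lintegral_mono (Gk_pow_le s hs)
    _ = ∫⁻ z in closedBall (0:E2) 1,
          ENNReal.ofReal ((2*s)^s) * ENNReal.ofReal (‖z‖ ^ (-2⁻¹ : ℝ)) :=
        by rw [lintegral_indicator measurableSet_closedBall]
    _ = ENNReal.ofReal ((2*s)^s) * ∫⁻ z in closedBall (0:E2) 1,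
          ENNReal.ofReal (‖z‖ ^ (-2⁻¹ : ℝ)) := by
        rw [lintegral_const_mul]
        exact ENNReal.measurable_ofReal.comp (measurable_norm.pow_const _)
    _ < ∞ := ENNReal.mul_lt_top ENNReal.ofReal_lt_top finite_sing

/-- For `r ∈ (2,∞)` there is `C` such that for all measurable `f, u : ℝ² → ℂ`,
`‖f(x) ∫ |log(|x−y|/⟨x⟩)| |u(y)|² dy‖_{L²_x} ≤ C(‖f‖_{L²}+‖f‖_{L^r}) ‖(1+log⟨·⟩)^{1/2} u‖_{L²}²`,
both sides possibly `+∞` (stated in `ℝ≥0∞`). -/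
theorem stmt6 (r : ℝ) (hr : 2 < r) :
    ∃ C : ℝ≥0, ∀ f u : E2 → ℂ, Measurable f → Measurable u →
      (∫⁻ x, ((‖f x‖₊ : ℝ≥0∞) *
          ∫⁻ y, ENNReal.ofReal |Real.log (‖x - y‖ / jbr x)| * (‖u y‖₊ : ℝ≥0∞) ^ 2) ^ 2)
        ^ (1 / 2 : ℝ)
      ≤ C * (eLpNorm f 2 volume + eLpNorm f (ENNReal.ofReal r) volume) *
          ∫⁻ y, ENNReal.ofReal (1 + Real.log (jbr y)) * (‖u y‖₊ : ℝ≥0∞) ^ 2 := by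
  have hr2 : 1 < r / 2 := by linarith
  set q : ℝ := Real.conjExponent (r/2) with hqdef
  have hpq : (r/2).HolderConjugate q := Real.HolderConjugate.conjExponent hr2
  have hq1 : 1 < q := (Real.holderConjugate_iff.1 hpq.symm).1
  set s : ℝ := 2 * q with hsdef
  have hs1 : 1 ≤ s := by nlinarith
  have hs0 : 0 < s := by linarith
  set B : ℝ≥0∞ := ∫⁻ z : E2, Gk z ^ s with hB
  have hBfin : B < ∞ := finite_Gk_rpow s hs1
  set b : ℝ≥0∞ := B ^ (1/s : ℝ) with hb
  have hbfin : b ≠ ∞ := ENNReal.rpow_ne_top_of_nonneg (by positivity) hBfin.ne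
  refine ⟨2 + b.toNNReal, ?_⟩
  intro f u hf hu
  have npow_eq : ∀ a : ℝ≥0∞, a ^ (2:ℕ) = a ^ (2:ℝ) := fun a => by
    rw [← ENNReal.rpow_natCast]; norm_num
  simp only [npow_eq]
  set F : E2 → ℝ≥0∞ := fun x => (‖f x‖₊ : ℝ≥0∞) with hF
  set w : E2 → ℝ≥0∞ := fun y => (‖u y‖₊ : ℝ≥0∞) ^ (2:ℝ) with hw
  have hFm : Measurable F := hf.nnnorm.coe_nnreal_ennreal
  have hwm : Measurable w := hu.nnnorm.coe_nnreal_ennreal.pow_const _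
  set L : E2 → ℝ≥0∞ := fun y => ENNReal.ofReal (1 + Real.log (jbr y)) with hL
  have hLm : Measurable L :=
    ENNReal.measurable_ofReal.comp (measurable_const.add (Real.measurable_log.comp measurable_jbr))
  set A : ℝ≥0∞ := ∫⁻ y, L y * w y with hA
  set W : ℝ≥0∞ := ∫⁻ y, w y with hW
  have hWA : W ≤ A := by
    rw [hW, hA]
    apply lintegral_mono
    intro y
    conv_lhs => rw [← one_mul (w y)]
    apply mul_le_mul_left
    exact ENNReal.one_le_ofReal.2 (by nlinarith [log_jbr_nonneg y])
  set H : E2 → ℝ≥0∞ := fun x => ∫⁻ y, Gk (x - y) * w y with hH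
  have hGm2 : Measurable fun p : E2 × E2 => Gk (p.1 - p.2) * w p.2 :=
    (measurable_Gk.comp (measurable_fst.sub measurable_snd)).mul (hwm.comp measurable_snd)
  have hHm : Measurable H := hGm2.lintegral_prod_right'
  -- kernel bound
  have hK : ∀ x, (∫⁻ y, ENNReal.ofReal |Real.log (‖x - y‖ / jbr x)| * w y) ≤ 2 * A + H x := by
    intro x
    calc ∫⁻ y, ENNReal.ofReal |Real.log (‖x - y‖ / jbr x)| * w y
        ≤ ∫⁻ y, (2 * L y + Gk (x - y)) * w y :=
          lintegral_mono fun y => mul_le_mul_left (kernel_bound x y) _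
      _ = ∫⁻ y, (2 * (L y * w y) + Gk (x - y) * w y) := by
          apply lintegral_congr; intro y; ring
      _ = (∫⁻ y, 2 * (L y * w y)) + ∫⁻ y, Gk (x - y) * w y :=
          lintegral_add_left ((hLm.mul hwm).const_mul 2) _
      _ = 2 * A + H x := by rw [lintegral_const_mul 2 (f := fun y => L y * w y) (hLm.mul hwm)]
  set N2 : ℝ≥0∞ := eLpNorm f 2 volume with hN2
  set Nr : ℝ≥0∞ := eLpNorm f (ENNReal.ofReal r) volume with hNr
  -- T1
  have hT1 : (∫⁻ x, (F x * (2 * A)) ^ (2:ℝ)) ^ (1/2:ℝ) = 2 * A * N2 := by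
    have h1 : ∀ x, (F x * (2*A)) ^ (2:ℝ) = (2*A)^(2:ℝ) * F x ^ (2:ℝ) := fun x => by
      rw [ENNReal.mul_rpow_of_nonneg _ _ (by norm_num : (0:ℝ) ≤ 2), mul_comm]
    simp only [h1]
    rw [lintegral_const_mul _ (hFm.pow_const _),
      ENNReal.mul_rpow_of_nonneg _ _ (by norm_num : (0:ℝ) ≤ 1/2),
      ← ENNReal.rpow_mul, show ((2:ℝ) * (1/2)) = 1 by norm_num, ENNReal.rpow_one, hN2,
      eLpNorm_eq_lintegral_rpow_enorm_toReal (by norm_num) (by norm_num)]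
    norm_num
    rfl
  -- Cauchy-Schwarz pointwise in x
  have hCS : ∀ x, H x ^ (2:ℝ) ≤ (∫⁻ y, Gk (x - y) ^ (2:ℝ) * w y) * W := by
    intro x
    have conj2 : (2:ℝ).HolderConjugate 2 := Real.holderConjugate_iff.2 ⟨one_lt_two, by norm_num⟩
    have hm1 : AEMeasurable (fun y => Gk (x - y) * w y ^ (1/2:ℝ)) volume :=
      ((measurable_Gk.comp (measurable_const.sub measurable_id)).mul
        (hwm.pow_const _)).aemeasurable
    have hm2 : AEMeasurable (fun y : E2 => w y ^ (1/2:ℝ)) volume :=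
      (hwm.pow_const _).aemeasurable
    have h2 := ENNReal.lintegral_mul_le_Lp_mul_Lq volume conj2 hm1 hm2
    simp only [Pi.mul_apply] at h2
    have e1 : ∀ y, Gk (x - y) * w y ^ (1/2:ℝ) * w y ^ (1/2:ℝ) = Gk (x - y) * w y := fun y => by
      rw [mul_assoc, ← ENNReal.rpow_add_of_nonneg _ _ (by norm_num) (by norm_num)]
      norm_num
    have e2 : ∀ y, (Gk (x - y) * w y ^ (1/2:ℝ)) ^ (2:ℝ) = Gk (x - y) ^ (2:ℝ) * w y := fun y => by
      rw [ENNReal.mul_rpow_of_nonneg _ _ (by norm_num : (0:ℝ) ≤ 2), ← ENNReal.rpow_mul]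
      norm_num
    have e3 : ∀ y : E2, (w y ^ (1/2:ℝ)) ^ (2:ℝ) = w y := fun y => by
      rw [← ENNReal.rpow_mul]; norm_num
    simp only [e1, e2, e3] at h2
    have h3 : H x ≤ (∫⁻ y, Gk (x - y) ^ (2:ℝ) * w y) ^ (1/2:ℝ) * W ^ (1/2:ℝ) := h2
    calc H x ^ (2:ℝ)
        ≤ ((∫⁻ y, Gk (x - y) ^ (2:ℝ) * w y) ^ (1/2:ℝ) * W ^ (1/2:ℝ)) ^ (2:ℝ) :=
          ENNReal.rpow_le_rpow h3 (by norm_num)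
      _ = (∫⁻ y, Gk (x - y) ^ (2:ℝ) * w y) * W := by
          rw [ENNReal.mul_rpow_of_nonneg _ _ (by norm_num : (0:ℝ) ≤ 2),
            ← ENNReal.rpow_mul, ← ENNReal.rpow_mul]
          norm_num
  -- Hoelder in x for fixed y
  have hHolder : ∀ y : E2, (∫⁻ x, F x ^ (2:ℝ) * Gk (x - y) ^ (2:ℝ)) ≤
      Nr ^ (2:ℝ) * B ^ (1/q : ℝ) := by
    intro y
    have hm1 : AEMeasurable (fun x => F x ^ (2:ℝ)) volume := (hFm.pow_const _).aemeasurable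
    have hm2 : AEMeasurable (fun x => Gk (x - y) ^ (2:ℝ)) volume :=
      ((measurable_Gk.comp (measurable_id.sub measurable_const)).pow_const _).aemeasurable
    have h2 := ENNReal.lintegral_mul_le_Lp_mul_Lq volume hpq hm1 hm2
    simp only [Pi.mul_apply] at h2
    have e1 : ∀ x, (F x ^ (2:ℝ)) ^ (r/2 : ℝ) = F x ^ (r:ℝ) := fun x => by
      rw [← ENNReal.rpow_mul]; congr 1; field_simp
    have e2 : ∀ x, (Gk (x - y) ^ (2:ℝ)) ^ (q:ℝ) = Gk (x - y) ^ (s:ℝ) := fun x => by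
      rw [← ENNReal.rpow_mul]
    have e3 : (∫⁻ x, Gk (x - y) ^ (s:ℝ)) = B := by
      rw [hB]; exact lintegral_sub_right_eq_self (fun z => Gk z ^ (s:ℝ)) y
    simp only [e1, e2, e3] at h2
    calc (∫⁻ x, F x ^ (2:ℝ) * Gk (x - y) ^ (2:ℝ))
        ≤ (∫⁻ x, F x ^ (r:ℝ)) ^ (1/(r/2) : ℝ) * B ^ (1/q : ℝ) := h2
      _ = Nr ^ (2:ℝ) * B ^ (1/q : ℝ) := by
          congr 1
          rw [hNr, eLpNorm_eq_lintegral_rpow_enorm_toReal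
            (by simp [ENNReal.ofReal_eq_zero]; linarith) ENNReal.ofReal_ne_top,
            ENNReal.toReal_ofReal (by linarith), ← ENNReal.rpow_mul]
          congr 1
          field_simp
  -- T2 squared
  have hprodm : AEMeasurable (Function.uncurry fun x y =>
      F x ^ (2:ℝ) * (Gk (x - y) ^ (2:ℝ) * w y)) (volume.prod volume) := by
    apply Measurable.aemeasurable
    apply Measurable.mul
    · exact (hFm.comp measurable_fst).pow_const _
    · exact ((measurable_Gk.comp (measurable_fst.sub measurable_snd)).pow_const _).mul
        (hwm.comp measurable_snd)
  have hT2sq : (∫⁻ x, (F x * H x) ^ (2:ℝ)) ≤ W * (Nr ^ (2:ℝ) * B ^ (1/q:ℝ) * W) := by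
    calc ∫⁻ x, (F x * H x) ^ (2:ℝ)
        = ∫⁻ x, F x ^ (2:ℝ) * H x ^ (2:ℝ) := by
          apply lintegral_congr; intro x
          rw [ENNReal.mul_rpow_of_nonneg _ _ (by norm_num : (0:ℝ) ≤ 2)]
      _ ≤ ∫⁻ x, F x ^ (2:ℝ) * ((∫⁻ y, Gk (x - y) ^ (2:ℝ) * w y) * W) :=
          lintegral_mono fun x => mul_le_mul_right (hCS x) _
      _ = ∫⁻ x, (F x ^ (2:ℝ) * ∫⁻ y, Gk (x - y) ^ (2:ℝ) * w y) * W := by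
          apply lintegral_congr; intro x; ring
      _ = (∫⁻ x, F x ^ (2:ℝ) * ∫⁻ y, Gk (x - y) ^ (2:ℝ) * w y) * W := by
          apply lintegral_mul_const
          exact (hFm.pow_const _).mul
            (((measurable_Gk.comp (measurable_fst.sub measurable_snd)).pow_const _).mul
              (hwm.comp measurable_snd)).lintegral_prod_right'
      _ ≤ (Nr ^ (2:ℝ) * B ^ (1/q:ℝ) * W) * W := by
          apply mul_le_mul_left
          calc ∫⁻ x, F x ^ (2:ℝ) * ∫⁻ y, Gk (x - y) ^ (2:ℝ) * w y
              = ∫⁻ x, ∫⁻ y, F x ^ (2:ℝ) * (Gk (x - y) ^ (2:ℝ) * w y) := by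
                apply lintegral_congr; intro x
                rw [lintegral_const_mul]
                exact ((measurable_Gk.comp (measurable_const.sub measurable_id)).pow_const _).mul hwm
            _ = ∫⁻ y, ∫⁻ x, F x ^ (2:ℝ) * (Gk (x - y) ^ (2:ℝ) * w y) :=
                lintegral_lintegral_swap hprodm
            _ = ∫⁻ y, (∫⁻ x, F x ^ (2:ℝ) * Gk (x - y) ^ (2:ℝ)) * w y := by
                apply lintegral_congr; intro y
                rw [← lintegral_mul_const]
                · apply lintegral_congr; intro x; ring
                · exact (hFm.pow_const _).mul
                    ((measurable_Gk.comp (measurable_id.sub measurable_const)).pow_const _)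
            _ ≤ ∫⁻ y, (Nr ^ (2:ℝ) * B ^ (1/q:ℝ)) * w y :=
                lintegral_mono fun y => mul_le_mul_left (hHolder y) _
            _ = Nr ^ (2:ℝ) * B ^ (1/q:ℝ) * W := lintegral_const_mul _ hwm
      _ = W * (Nr ^ (2:ℝ) * B ^ (1/q:ℝ) * W) := by ring
  have hT2 : (∫⁻ x, (F x * H x) ^ (2:ℝ)) ^ (1/2:ℝ) ≤ W * Nr * b := by
    calc (∫⁻ x, (F x * H x) ^ (2:ℝ)) ^ (1/2:ℝ)
        ≤ (W * (Nr ^ (2:ℝ) * B ^ (1/q:ℝ) * W)) ^ (1/2:ℝ) :=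
          ENNReal.rpow_le_rpow hT2sq (by norm_num)
      _ = (W ^ (2:ℝ) * (Nr ^ (2:ℝ) * B ^ (1/q:ℝ))) ^ (1/2:ℝ) := by
          congr 1
          have hWW : W ^ (2:ℝ) = W * W := by
            rw [show ((2:ℝ)) = (1:ℝ) + 1 by norm_num,
              ENNReal.rpow_add_of_nonneg _ _ zero_le_one zero_le_one, ENNReal.rpow_one]
          rw [hWW]
          ring
      _ = W * Nr * b := by
          rw [ENNReal.mul_rpow_of_nonneg _ _ (by norm_num : (0:ℝ) ≤ 1/2),
            ENNReal.mul_rpow_of_nonneg _ _ (by norm_num : (0:ℝ) ≤ 1/2),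
            ← ENNReal.rpow_mul, ← ENNReal.rpow_mul, ← ENNReal.rpow_mul, hb]
          have : (1/q : ℝ) * (1/2) = 1/s := by rw [hsdef]; field_simp
          rw [this]
          norm_num [mul_assoc]
  -- main chain
  have hmainmeas1 : AEMeasurable (fun x => F x * (2 * A)) volume :=
    (hFm.mul_const _).aemeasurable
  have hmainmeas2 : AEMeasurable (fun x => F x * H x) volume := (hFm.mul hHm).aemeasurable
  calc (∫⁻ x, (F x * ∫⁻ y, ENNReal.ofReal |Real.log (‖x - y‖ / jbr x)| * w y) ^ (2:ℝ)) ^ (1/2:ℝ)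
      ≤ (∫⁻ x, ((fun x => F x * (2*A)) + fun x => F x * H x) x ^ (2:ℝ)) ^ (1/2:ℝ) := by
        apply ENNReal.rpow_le_rpow _ (by norm_num)
        apply lintegral_mono
        intro x
        apply ENNReal.rpow_le_rpow _ (by norm_num)
        simp only [Pi.add_apply]
        rw [← mul_add]
        exact mul_le_mul_right (hK x) _
    _ ≤ (∫⁻ x, (F x * (2*A)) ^ (2:ℝ)) ^ (1/2:ℝ) + (∫⁻ x, (F x * H x) ^ (2:ℝ)) ^ (1/2:ℝ) :=
        ENNReal.lintegral_Lp_add_le hmainmeas1 hmainmeas2 (by norm_num)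
    _ ≤ 2 * A * N2 + W * Nr * b := by rw [hT1]; exact add_le_add le_rfl hT2
    _ ≤ 2 * A * N2 + A * Nr * b := by
        apply add_le_add le_rfl
        exact mul_le_mul_left (mul_le_mul_left hWA _) _
    _ = 2 * (N2 * A) + b * (Nr * A) := by ring
    _ ≤ (2 + b) * (N2 * A) + (2 + b) * (Nr * A) :=
        add_le_add (mul_le_mul_left le_self_add _) (mul_le_mul_left le_add_self _)
    _ = (2 + b) * (N2 + Nr) * A := by ring
    _ = ((2 + b.toNNReal : ℝ≥0) : ℝ≥0∞) * (N2 + Nr) * A := by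
        congr 2
        push_cast
        rw [ENNReal.coe_toNNReal hbfin]

end
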